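/- arXiv:0907.1722 — 9 statements merged into one kernel-verified Lean document; each statement's English description precedes it below -/
import Mathlib

section
/- Let ≺ be a strict partial order (an irreflexive transitive binary relation) on a set X. Then ≺ equals the intersection of all of its stratified extensions: for all a, b ∈ X, a ≺ b if and only if a ⊲ b holds for every stratified order ⊲ on X with ≺ ⊆ ⊲. -/
/-- A stratified order on `X`: an irreflexive, transitive relation such that the
relation `a ≃ b ↔ a = b ∨ (¬ r a b ∧ ¬ r b a)` is transitive. -/
def IsStratOrder {X : Type*} (r : X → X → Prop) : Prop :=
  (∀ a, ¬ r a a) ∧ (∀ a b c, r a b → r b c → r a c) ∧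
  (∀ a b c, (a = b ∨ (¬ r a b ∧ ¬ r b a)) → (b = c ∨ (¬ r b c ∧ ¬ r c b)) →
    (a = c ∨ (¬ r a c ∧ ¬ r c a)))

/-- Any strict partial order has a stratified (indeed linear) extension which
reverses no pair. -/
lemma exists_strat_ext {X : Type*} (q : X → X → Prop)
    (hirr : ∀ a, ¬ q a a) (htrans : ∀ a b c, q a b → q b c → q a c) :
    ∃ r : X → X → Prop, IsStratOrder r ∧ (∀ x y, q x y → r x y) ∧
      (∀ x y, q y x → ¬ r x y) := by
  classical
  set s : X → X → Prop := fun x y => q x y ∨ x = y with hs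
  have hsinst : IsPartialOrder X s :=
    { refl := fun x => Or.inr rfl
      trans := by
        rintro x y z (hxy | rfl) (hyz | rfl)
        · exact Or.inl (htrans _ _ _ hxy hyz)
        · exact Or.inl hxy
        · exact Or.inl hyz
        · exact Or.inr rfl
      antisymm := by
        rintro x y (hxy | rfl) (hyx | h)
        · exact absurd (htrans _ _ _ hxy hyx) (hirr x)
        · exact h.symm
        · rfl
        · rfl }
  obtain ⟨t, htlin, hst⟩ := @extend_partialOrder X s hsinst
  refine ⟨fun x y => t x y ∧ ¬ t y x, ⟨?_, ?_, ?_⟩, ?_, ?_⟩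
  · exact fun x ⟨h1, h2⟩ => h2 h1
  · rintro x y z ⟨h1, h2⟩ ⟨h3, h4⟩
    refine ⟨htlin.trans _ _ _ h1 h3, fun h5 => h2 (htlin.trans _ _ _ h3 h5)⟩
  · -- incomparability is equality for a linear order
    have key : ∀ x y : X, (x = y ∨ (¬ (t x y ∧ ¬ t y x) ∧ ¬ (t y x ∧ ¬ t x y))) → x = y := by
      rintro x y (rfl | ⟨h1, h2⟩)
      · rfl
      · rcases htlin.total x y with h | h
        · by_cases h' : t y x
          · exact htlin.antisymm _ _ h h'
          · exact absurd ⟨h, h'⟩ h1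
        · by_cases h' : t x y
          · exact htlin.antisymm _ _ h' h
          · exact absurd ⟨h, h'⟩ h2
    intro x y z hxy hyz
    exact Or.inl ((key x y hxy).trans (key y z hyz))
  · intro x y hxy
    refine ⟨hst _ _ (Or.inl hxy), fun h5 => ?_⟩
    have : x = y := htlin.antisymm _ _ (hst _ _ (Or.inl hxy)) h5
    exact hirr x (this ▸ hxy)
  · intro x y hyx ⟨h1, h2⟩
    exact h2 (hst _ _ (Or.inl hyx))

/-- A strict partial order equals the intersection of all of its stratified extensions. -/
theorem stmt0 {X : Type*} (prec : X → X → Prop)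
    (hirr : ∀ a, ¬ prec a a)
    (htrans : ∀ a b c, prec a b → prec b c → prec a c) :
    ∀ a b : X, prec a b ↔
      ∀ r : X → X → Prop, IsStratOrder r → (∀ x y, prec x y → r x y) → r a b := by
  intro a b
  constructor
  · intro hab r _ hext
    exact hext a b hab
  · intro h
    by_contra hab
    by_cases hne : a = b
    · obtain ⟨r, hr, hext, _⟩ := exists_strat_ext prec hirr htrans
      exact hr.1 a (hne ▸ h r hr hext)
    -- enlarge prec by forcing b before a
    set q : X → X → Prop := fun x y => prec x y ∨ ((prec x b ∨ x = b) ∧ (prec a y ∨ a = y))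
      with hq
    have hqirr : ∀ x, ¬ q x x := by
      rintro x (hx | ⟨h1, h2⟩)
      · exact hirr x hx
      · rcases h1 with h1 | h1 <;> rcases h2 with h2 | h2
        · exact hab (htrans _ _ _ h2 h1)
        · exact hab (h2 ▸ h1)
        · exact hab (h1 ▸ h2)
        · exact hne (h2.trans h1)
    have hqtrans : ∀ x y z, q x y → q y z → q x z := by
      rintro x y z (hxy | ⟨h1, h2⟩) (hyz | ⟨h3, h4⟩)
      · exact Or.inl (htrans _ _ _ hxy hyz)
      · refine Or.inr ⟨?_, h4⟩
        rcases h3 with h3 | rfl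
        · exact Or.inl (htrans _ _ _ hxy h3)
        · exact Or.inl hxy
      · refine Or.inr ⟨h1, ?_⟩
        rcases h2 with h2 | rfl
        · exact Or.inl (htrans _ _ _ h2 hyz)
        · exact Or.inl hyz
      · exact Or.inr ⟨h1, h4⟩
    obtain ⟨r, hr, hext, hrev⟩ := exists_strat_ext q hqirr hqtrans
    have hqba : q b a := Or.inr ⟨Or.inr rfl, Or.inr rfl⟩
    exact hrev a b hqba (h r hr (fun x y hxy => hext x y (Or.inl hxy)))
end

section
/- Let E be a finite set and ind an irreflexive symmetric relation on E, and consider the comtrace alphabet (E, sim, ser) with sim = ser = ind. Then for all words x, y ∈ E*: x ≡_ind y (trace congruence) if and only if x^{} ≡_ser y^{} (comtrace congruence of the associated singleton step sequences). -/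
/-!
Both directions push a generating relation through a map of words. A swap `a b ↦ b a` of
independent letters becomes two splittings of the step `{a, b}`. Conversely, flattening step
sequences into words sends a splitting `A ↦ B C` to a permutation of the pairwise independent
letters of `A` (disjointness of `B` and `C` comes from the irreflexivity of `ser`), and
permuting a pairwise independent factor is a composition of trace swaps.
-/

variable {E : Type*}

/-- A step over a comtrace alphabet `(E, sim, ser)`: a nonempty finite set of events,
pairwise related by `sim`. -/
def IsStep [DecidableEq E] (sim : E → E → Prop) (A : Finset E) : Prop :=
  A.Nonempty ∧ ∀ a ∈ A, ∀ b ∈ A, a ≠ b → sim a b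

/-- A step sequence: a finite list of steps. -/
def IsStepSeq [DecidableEq E] (sim : E → E → Prop) (u : List (Finset E)) : Prop :=
  ∀ A ∈ u, IsStep sim A

/-- The generating relation of comtrace congruence:
`w·A·z ≈ w·B·C·z` whenever `A`, `B`, `C` are steps with `B ∪ C = A` and `B × C ⊆ ser`. -/
def CTBase [DecidableEq E] (sim ser : E → E → Prop) (u v : List (Finset E)) : Prop :=
  ∃ (w z : List (Finset E)) (A B C : Finset E),
    IsStepSeq sim w ∧ IsStepSeq sim z ∧
    IsStep sim A ∧ IsStep sim B ∧ IsStep sim C ∧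
    B ∪ C = A ∧ (∀ b ∈ B, ∀ c ∈ C, ser b c) ∧
    u = w ++ A :: z ∧ v = w ++ B :: C :: z

/-- The least equivalence relation containing `base`. -/
def LeastEquiv {α : Type*} (base : α → α → Prop) (x y : α) : Prop :=
  ∀ c : α → α → Prop, Equivalence c → (∀ a b, base a b → c a b) → c x y

/-- Comtrace congruence: the least equivalence relation containing `CTBase`. -/
def CTEquiv [DecidableEq E] (sim ser : E → E → Prop) :
    List (Finset E) → List (Finset E) → Prop :=
  LeastEquiv (CTBase sim ser)

/-- The generating relation of Mazurkiewicz trace congruence: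
`w·a·b·z ≈ w·b·a·z` whenever `(a, b) ∈ ind`. -/
def TraceBase (ind : E → E → Prop) (x y : List E) : Prop :=
  ∃ (w z : List E) (a b : E), ind a b ∧ x = w ++ a :: b :: z ∧ y = w ++ b :: a :: z

/-- Trace congruence: the least equivalence relation containing `TraceBase`. -/
def TraceEquiv (ind : E → E → Prop) : List E → List E → Prop :=
  LeastEquiv (TraceBase ind)

namespace LeastEquiv

variable {α β : Type*} {r : α → α → Prop} {s : β → β → Prop}

theorem equivalence (r : α → α → Prop) : Equivalence (LeastEquiv r) where
  refl _ _ hc _ := hc.refl _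
  symm h c hc hr := hc.symm (h c hc hr)
  trans h₁ h₂ c hc hr := hc.trans (h₁ c hc hr) (h₂ c hc hr)

theorem of_rel {x y : α} (h : r x y) : LeastEquiv r x y := fun _ _ hr => hr x y h

theorem map (f : α → β) (hf : ∀ a b, r a b → LeastEquiv s (f a) (f b)) {x y : α}
    (h : LeastEquiv r x y) : LeastEquiv s (f x) (f y) :=
  h (fun a b => LeastEquiv s (f a) (f b)) ((equivalence s).comap f) hf

end LeastEquiv

section Trace

variable {ind : E → E → Prop}

theorem traceEquiv_append (w z : List E) {p q : List E} (h : TraceEquiv ind p q) :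
    TraceEquiv ind (w ++ p ++ z) (w ++ q ++ z) := by
  refine LeastEquiv.map (fun p => w ++ p ++ z) ?_ h
  rintro _ _ ⟨w', z', a, b, hab, rfl, rfl⟩
  exact LeastEquiv.of_rel ⟨w ++ w', z' ++ z, a, b, hab, by simp, by simp⟩

theorem traceEquiv_of_perm (hsymm : ∀ a b, ind a b → ind b a) {l₁ l₂ : List E}
    (hp : l₁.Perm l₂) (hpw : l₁.Pairwise ind) : TraceEquiv ind l₁ l₂ := by
  induction hp with
  | nil => exact (LeastEquiv.equivalence _).refl _
  | cons a _ ih => simpa using traceEquiv_append [a] [] (ih hpw.of_cons)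
  | swap a b l =>
      exact LeastEquiv.of_rel ⟨[], l, b, a, List.rel_of_pairwise_cons hpw (by simp), rfl, rfl⟩
  | trans p₁ _ ih₁ ih₂ =>
      exact (LeastEquiv.equivalence _).trans (ih₁ hpw)
        (ih₂ ((p₁.pairwise_iff (hsymm _ _)).1 hpw))

end Trace

theorem flatMap_toList_map_singleton (l : List E) :
    (l.map fun a => ({a} : Finset E)).flatMap Finset.toList = l := by
  induction l with
  | nil => rfl
  | cons a l ih => simp [ih]

section Comtrace

variable [DecidableEq E] {sim ser : E → E → Prop}

theorem isStep_singleton (a : E) : IsStep sim {a} :=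
  ⟨Finset.singleton_nonempty a, by simp_all⟩

theorem isStepSeq_map_singleton (l : List E) :
    IsStepSeq sim (l.map fun a => ({a} : Finset E)) := by
  simp only [IsStepSeq, List.mem_map]
  rintro _ ⟨a, -, rfl⟩
  exact isStep_singleton a

theorem isStep_pair (hsymm : ∀ a b, sim a b → sim b a) {a b : E} (hab : sim a b) :
    IsStep sim {a, b} := by
  refine ⟨Finset.insert_nonempty a {b}, ?_⟩
  simp only [Finset.mem_insert, Finset.mem_singleton]
  rintro u (rfl | rfl) v (rfl | rfl) huv
  exacts [absurd rfl huv, hab, hsymm _ _ hab, absurd rfl huv]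

theorem ctBase_pair_split {a b : E} (hstep : IsStep sim {a, b}) (hab : ser a b) (w z : List E) :
    CTBase sim ser ((w.map fun a => {a}) ++ {a, b} :: z.map fun a => {a})
      ((w ++ a :: b :: z).map fun a => ({a} : Finset E)) := by
  refine ⟨_, _, {a, b}, {a}, {b}, isStepSeq_map_singleton w, isStepSeq_map_singleton z, hstep,
    isStep_singleton a, isStep_singleton b, (Finset.insert_eq a {b}).symm, ?_, rfl, by simp⟩
  simpa using hab

theorem ctEquiv_map_singleton_swap {a b : E} (hstep : IsStep sim {a, b}) (hab : ser a b)
    (hba : ser b a) (w z : List E) :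
    CTEquiv sim ser ((w ++ a :: b :: z).map fun a => ({a} : Finset E))
      ((w ++ b :: a :: z).map fun a => ({a} : Finset E)) := by
  have hsplit_ab := ctBase_pair_split hstep hab w z
  have hsplit_ba := ctBase_pair_split (Finset.pair_comm a b ▸ hstep) hba w z
  rw [Finset.pair_comm] at hsplit_ba
  exact (LeastEquiv.equivalence _).trans
    ((LeastEquiv.equivalence _).symm (LeastEquiv.of_rel hsplit_ab)) (LeastEquiv.of_rel hsplit_ba)

theorem ctEquiv_map_singleton_of_traceEquiv (hsymm : ∀ a b, sim a b → sim b a) {x y : List E}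
    (h : TraceEquiv sim x y) :
    CTEquiv sim sim (x.map fun a => ({a} : Finset E)) (y.map fun a => ({a} : Finset E)) := by
  refine LeastEquiv.map (fun x => x.map fun a => ({a} : Finset E)) ?_ h
  rintro _ _ ⟨w, z, a, b, hab, rfl, rfl⟩
  exact ctEquiv_map_singleton_swap (isStep_pair hsymm hab) hab (hsymm a b hab) w z

theorem toList_perm_append_of_union {A B C : Finset E} (hBC : B ∪ C = A) (hdisj : Disjoint B C) :
    A.toList.Perm (B.toList ++ C.toList) := by
  refine (List.perm_ext_iff_of_nodup A.nodup_toList ?_).2 fun a => by simp [← hBC]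
  refine List.nodup_append.2 ⟨B.nodup_toList, C.nodup_toList, fun a ha b hb hab => ?_⟩
  exact Finset.disjoint_left.1 hdisj (Finset.mem_toList.1 ha) (hab ▸ Finset.mem_toList.1 hb)

theorem traceEquiv_flatMap_of_ctBase (hirr : ∀ a, ¬ ser a a)
    (hsymm : ∀ a b, sim a b → sim b a)
    {u v : List (Finset E)} (h : CTBase sim ser u v) :
    TraceEquiv sim (u.flatMap Finset.toList) (v.flatMap Finset.toList) := by
  obtain ⟨w, z, A, B, C, -, -, hA, -, -, hBC, hser, rfl, rfl⟩ := h
  have hdisj : Disjoint B C :=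
    Finset.disjoint_left.2 fun a haB haC => hirr a (hser a haB a haC)
  have hpw : A.toList.Pairwise sim :=
    A.nodup_toList.imp_of_mem fun ha hb hne =>
      hA.2 _ (Finset.mem_toList.1 ha) _ (Finset.mem_toList.1 hb) hne
  simpa using traceEquiv_append (w.flatMap Finset.toList) (z.flatMap Finset.toList)
    (traceEquiv_of_perm hsymm (toList_perm_append_of_union hBC hdisj) hpw)

theorem traceEquiv_flatMap_of_ctEquiv (hirr : ∀ a, ¬ ser a a)
    (hsymm : ∀ a b, sim a b → sim b a)
    {u v : List (Finset E)} (h : CTEquiv sim ser u v) :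
    TraceEquiv sim (u.flatMap Finset.toList) (v.flatMap Finset.toList) :=
  LeastEquiv.map (fun u : List (Finset E) => u.flatMap Finset.toList)
    (fun _ _ => traceEquiv_flatMap_of_ctBase hirr hsymm) h

end Comtrace

theorem stmt3_general [DecidableEq E] (ind : E → E → Prop)
    (hirr : ∀ a, ¬ ind a a) (hsymm : ∀ a b, ind a b → ind b a)
    (x y : List E) :
    TraceEquiv ind x y ↔
      CTEquiv ind ind (x.map fun a => ({a} : Finset E))
        (y.map fun a => ({a} : Finset E)) := by
  refine ⟨ctEquiv_map_singleton_of_traceEquiv hsymm, fun h => ?_⟩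
  simpa only [flatMap_toList_map_singleton] using traceEquiv_flatMap_of_ctEquiv hirr hsymm h

/-- For the comtrace alphabet with `sim = ser = ind`, two words are trace congruent
iff their associated singleton step sequences are comtrace congruent. -/
theorem stmt3 [DecidableEq E] [Fintype E] (ind : E → E → Prop)
    (hirr : ∀ a, ¬ ind a a) (hsymm : ∀ a b, ind a b → ind b a)
    (x y : List E) :
    TraceEquiv ind x y ↔
      CTEquiv ind ind (x.map fun a => ({a} : Finset E))
        (y.map fun a => ({a} : Finset E)) :=
  stmt3_general ind hirr hsymm x y
end

section
/- Let (E, sim, ser) be a comtrace alphabet and let A, B be steps. Then (A, B) ∈ FD if and only if either (i) there exists a nonempty proper subset C of B such that A ∪ C is a step and the step sequence (A ∪ C)·(B \ C) is comtrace-congruent to the step sequence A·B, or (ii) A ∪ B is a step and the one-step sequence consisting of the single step A ∪ B is comtrace-congruent to A·B. -/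
variable {E : Type*}

/-- Forward dependency on steps: `(A, B) ∈ FD` iff there is a step `C ⊆ B` with
`A × C ⊆ ser` and `C × (B \ C) ⊆ ser`. -/
def FD [DecidableEq E] (sim ser : E → E → Prop) (A B : Finset E) : Prop :=
  ∃ C : Finset E, IsStep sim C ∧ C ⊆ B ∧
    (∀ a ∈ A, ∀ c ∈ C, ser a c) ∧ (∀ c ∈ C, ∀ b ∈ B \ C, ser c b)

/-- Number of steps of `u` containing `b`. -/
def cntX [DecidableEq E] (b : E) (u : List (Finset E)) : ℕ :=
  u.countP (fun X => b ∈ X)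

/-- Number of pairs of steps `i < j` with `a` in step `i` and `b` in step `j`. -/
def lcntX [DecidableEq E] (a b : E) : List (Finset E) → ℕ
  | [] => 0
  | X :: t => (if a ∈ X then cntX b t else 0) + lcntX a b t

lemma cntX_nil [DecidableEq E] (b : E) : cntX b ([] : List (Finset E)) = 0 := rfl

lemma cntX_cons [DecidableEq E] (b : E) (X : Finset E) (t : List (Finset E)) :
    cntX b (X :: t) = (if b ∈ X then 1 else 0) + cntX b t := by
  simp [cntX, List.countP_cons]; omega

lemma cntX_append [DecidableEq E] (b : E) (w z : List (Finset E)) :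
    cntX b (w ++ z) = cntX b w + cntX b z := by
  simp [cntX, List.countP_append]

lemma lcntX_append [DecidableEq E] (a b : E) (w z : List (Finset E)) :
    lcntX a b (w ++ z) = lcntX a b w + lcntX a b z + cntX a w * cntX b z := by
  induction w with
  | nil => simp [lcntX, cntX]
  | cons X t ih =>
    simp only [List.cons_append, lcntX, ih, cntX_cons, cntX_append]
    by_cases h : a ∈ X <;> · simp [h, ih, cntX_append]; try ring

/-- The invariant preserved by comtrace congruence: occurrence counts of each event,
and the before-count of every pair `(a,b)` with `¬ ser a b`. -/
def InvR [DecidableEq E] (ser : E → E → Prop) (u v : List (Finset E)) : Prop :=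
  (∀ e : E, cntX e u = cntX e v) ∧
  (∀ a b : E, ¬ ser a b → lcntX a b u = lcntX a b v)

lemma invR_equiv [DecidableEq E] (ser : E → E → Prop) :
    Equivalence (InvR (E := E) ser) := by
  constructor
  · intro x; exact ⟨fun _ => rfl, fun _ _ _ => rfl⟩
  · rintro x y ⟨h1, h2⟩
    exact ⟨fun e => (h1 e).symm, fun a b h => (h2 a b h).symm⟩
  · rintro x y z ⟨h1, h2⟩ ⟨h3, h4⟩
    exact ⟨fun e => (h1 e).trans (h3 e), fun a b h => (h2 a b h).trans (h4 a b h)⟩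

lemma invR_base [DecidableEq E] (sim ser : E → E → Prop)
    (hsim_irr : ∀ a, ¬ sim a a) (hser_sub : ∀ a b, ser a b → sim a b)
    (u v : List (Finset E)) (h : CTBase sim ser u v) : InvR ser u v := by
  obtain ⟨w, z, X, Y, Z, _, _, _, _, _, hun, hser, hu, hv⟩ := h
  have hdisj : ∀ e, ¬ (e ∈ Y ∧ e ∈ Z) := by
    rintro e ⟨hy, hz⟩
    exact hsim_irr e (hser_sub e e (hser e hy e hz))
  have hmem : ∀ e, (e ∈ X) ↔ (e ∈ Y ∨ e ∈ Z) := by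
    intro e; rw [← hun]; simp [Finset.mem_union]
  subst hu hv
  constructor
  · intro e
    rw [cntX_append, cntX_append, cntX_cons, cntX_cons, cntX_cons]
    have h1 := hdisj e
    have h3 := hmem e
    by_cases hy : e ∈ Y
    · have hz : e ∉ Z := fun hz => h1 ⟨hy, hz⟩
      simp [hy, hz, h3]
    · by_cases hz : e ∈ Z
      · simp [hy, hz, h3]
      · simp [hy, hz, h3]
  · intro a b hab
    have hnab : ¬ (a ∈ Y ∧ b ∈ Z) := fun hh => hab (hser a hh.1 b hh.2)
    rw [lcntX_append, lcntX_append]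
    simp only [lcntX, cntX_cons]
    have h1 := hdisj a
    have h2 := hdisj b
    have h3 := hmem a
    have h4 := hmem b
    by_cases hy : a ∈ Y
    · have hz : a ∉ Z := fun h => h1 ⟨hy, h⟩
      have hbz : b ∉ Z := fun h => hnab ⟨hy, h⟩
      by_cases hby : b ∈ Y
      · simp [hy, hz, hby, hbz, h3, h4]; try ring
      · simp [hy, hz, hby, hbz, h3, h4]; try ring
    · by_cases hz : a ∈ Z
      · by_cases hby : b ∈ Y
        · have hbz : b ∉ Z := fun h => h2 ⟨hby, h⟩
          simp [hy, hz, hby, hbz, h3, h4]; try ring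
        · by_cases hbz : b ∈ Z
          · simp [hy, hz, hby, hbz, h3, h4]; try ring
          · simp [hy, hz, hby, hbz, h3, h4]; try ring
      · by_cases hby : b ∈ Y
        · have hbz : b ∉ Z := fun h => h2 ⟨hby, h⟩
          simp [hy, hz, hby, hbz, h3, h4]; try ring
        · by_cases hbz : b ∈ Z
          · simp [hy, hz, hby, hbz, h3, h4]; try ring
          · simp [hy, hz, hby, hbz, h3, h4]; try ring

lemma cntX_pair [DecidableEq E] (e : E) (X Y : Finset E) :
    cntX e [X, Y] = (if e ∈ X then 1 else 0) + (if e ∈ Y then 1 else 0) := by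
  simp [cntX_cons, cntX_nil]

lemma lcntX_pair [DecidableEq E] (a b : E) (X Y : Finset E) :
    lcntX a b [X, Y] = (if a ∈ X then (if b ∈ Y then 1 else 0) else 0) := by
  simp [lcntX, cntX_cons, cntX_nil]

lemma lcntX_single [DecidableEq E] (a b : E) (X : Finset E) :
    lcntX a b [X] = 0 := by
  simp [lcntX, cntX_nil]

/-- Characterization of forward dependency via comtrace congruence. -/
theorem stmt5 [DecidableEq E] [Fintype E] (sim ser : E → E → Prop)
    (hsim_irr : ∀ a, ¬ sim a a) (hsim_symm : ∀ a b, sim a b → sim b a)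
    (hser_sub : ∀ a b, ser a b → sim a b)
    (A B : Finset E) (hA : IsStep sim A) (hB : IsStep sim B) :
    FD sim ser A B ↔
      ((∃ C : Finset E, C ⊆ B ∧ C.Nonempty ∧ C ≠ B ∧ IsStep sim (A ∪ C) ∧
          CTEquiv sim ser [A ∪ C, B \ C] [A, B]) ∨
        (IsStep sim (A ∪ B) ∧ CTEquiv sim ser [A ∪ B] [A, B])) := by
  constructor
  · -- forward direction
    rintro ⟨C, hCstep, hCB, hAC, hCBC⟩
    have hAunionC : IsStep sim (A ∪ C) := by
      refine ⟨Finset.Nonempty.mono Finset.subset_union_left hA.1, ?_⟩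
      intro a ha b hb hab
      rw [Finset.mem_union] at ha hb
      rcases ha with ha | ha <;> rcases hb with hb | hb
      · exact hA.2 a ha b hb hab
      · exact hser_sub a b (hAC a ha b hb)
      · exact hsim_symm b a (hser_sub b a (hAC b hb a ha))
      · exact hCstep.2 a ha b hb hab
    by_cases hCeqB : C = B
    · right
      subst hCeqB
      refine ⟨hAunionC, ?_⟩
      intro c hc hbase
      exact hbase _ _ ⟨[], [], A ∪ C, A, C, (by intro X hX; simp at hX),
        (by intro X hX; simp at hX), hAunionC, hA, hCstep, rfl, hAC, rfl, rfl⟩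
    · left
      refine ⟨C, hCB, hCstep.1, hCeqB, hAunionC, ?_⟩
      have hBC_ne : (B \ C).Nonempty := by
        rw [Finset.sdiff_nonempty]
        intro h
        exact hCeqB (Finset.Subset.antisymm hCB h)
      have hBCstep : IsStep sim (B \ C) := by
        refine ⟨hBC_ne, ?_⟩
        intro a ha b hb hab
        exact hB.2 a (Finset.mem_sdiff.mp ha).1 b (Finset.mem_sdiff.mp hb).1 hab
      intro c hc hbase
      have h1 : c [A ∪ C, B \ C] [A, C, B \ C] :=
        hbase _ _ ⟨[], [B \ C], A ∪ C, A, C, (by intro X hX; simp at hX),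
          (by intro X hX; simp at hX; subst hX; exact hBCstep),
          hAunionC, hA, hCstep, rfl, hAC, rfl, rfl⟩
      have h2 : c [A, B] [A, C, B \ C] :=
        hbase _ _ ⟨[A], [], B, C, B \ C,
          (by intro X hX; simp at hX; subst hX; exact hA),
          (by intro X hX; simp at hX),
          hB, hCstep, hBCstep, Finset.union_sdiff_of_subset hCB, hCBC, rfl, rfl⟩
      exact hc.trans h1 (hc.symm h2)
  · -- backward direction
    rintro (⟨C, hCB, hCne, hCneB, hACstep, heq⟩ | ⟨hABstep, heq⟩)
    · obtain ⟨hcnt, hl⟩ := heq (InvR ser) (invR_equiv ser)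
        (fun a b h => invR_base sim ser hsim_irr hser_sub a b h)
      have hAC_disj : ∀ e, e ∈ A → e ∉ C := by
        intro e heA heC
        have hce := hcnt e
        rw [cntX_pair, cntX_pair] at hce
        have h1 : e ∈ A ∪ C := Finset.mem_union_left _ heA
        have h2 : e ∉ B \ C := fun h => (Finset.mem_sdiff.mp h).2 heC
        have h3 : e ∈ B := hCB heC
        simp [h1, h2, heA, h3] at hce
      have hserAC : ∀ a ∈ A, ∀ c ∈ C, ser a c := by
        intro a ha c hc
        by_contra hns
        have hle := hl a c hns
        rw [lcntX_pair, lcntX_pair] at hle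
        have h1 : a ∈ A ∪ C := Finset.mem_union_left _ ha
        have h2 : c ∉ B \ C := fun h => (Finset.mem_sdiff.mp h).2 hc
        have h3 : c ∈ B := hCB hc
        simp [h1, h2, ha, h3] at hle
      have hserCBC : ∀ c ∈ C, ∀ b ∈ B \ C, ser c b := by
        intro c hc b hb
        by_contra hns
        have hle := hl c b hns
        rw [lcntX_pair, lcntX_pair] at hle
        have h1 : c ∈ A ∪ C := Finset.mem_union_right _ hc
        have h2 : c ∉ A := fun h => hAC_disj c h hc
        simp [h1, h2, hb] at hle
      exact ⟨C, ⟨hCne, fun a ha b hb hab => hB.2 a (hCB ha) b (hCB hb) hab⟩,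
        hCB, hserAC, hserCBC⟩
    · obtain ⟨hcnt, hl⟩ := heq (InvR ser) (invR_equiv ser)
        (fun a b h => invR_base sim ser hsim_irr hser_sub a b h)
      have hserAB : ∀ a ∈ A, ∀ b ∈ B, ser a b := by
        intro a ha b hb
        by_contra hns
        have hle := hl a b hns
        rw [lcntX_single, lcntX_pair] at hle
        simp [ha, hb] at hle
      refine ⟨B, hB, Finset.Subset.refl B, hserAB, ?_⟩
      intro c hc b hb
      rw [Finset.mem_sdiff] at hb
      exact absurd hb.1 hb.2
end

section
/- Let (E, sim, ser) be a comtrace alphabet and let u = A₁…A_k (with k ≥ 1) be a canonical step sequence. Then A₁ = { a ∈ E | there exists a step sequence w ≡ u whose first step contains a }. -/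
/-!
Comtrace congruence preserves the number of occurrences of every event and, for every pair
`(b, c)` with `¬ ser b c`, whether the `n`-th occurrence of `b` lies in an earlier step than the
`m`-th occurrence of `c`: splitting a step into `B C` only separates pairs in `B × C ⊆ ser`.

Suppose `a` lies in the first step `B` of some `w ≡ u` but not in `A₁`, and let `Aᵢ₊₁` be the
step of `u` holding the first occurrence of `a`. Let `C` be the set of events of `Aᵢ₊₁ ∩ B` that
do not occur in `A₁ … Aᵢ`. No occurrence precedes one in the first step of `w`, so
`Aᵢ × C ⊆ ser`. For `c ∈ C` and `d ∈ Aᵢ₊₁ \ C`, the first `c` precedes in `w` the occurrence of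
`d` that lies in `Aᵢ₊₁` (either `d ∉ B`, or that occurrence is not the first one of `d`), while
in `u` the two are simultaneous, so `C × (Aᵢ₊₁ \ C) ⊆ ser`. Hence `(Aᵢ, Aᵢ₊₁) ∈ FD`.
-/

variable {E : Type*}

/-- A step sequence `A₁…A_k` is canonical iff `(Aᵢ, Aᵢ₊₁) ∉ FD` for all `1 ≤ i < k`. -/
def Canonical [DecidableEq E] (sim ser : E → E → Prop) (u : List (Finset E)) : Prop :=
  u.Chain' (fun A B => ¬ FD sim ser A B)

lemma List.prefix_append_cons_cases {α : Type*} {y x z : List α} {a : α} (h : y <+: x ++ a :: z) :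
    y <+: x ∨ ∃ y', y = x ++ a :: y' ∧ y' <+: z := by
  induction x generalizing y with
  | nil =>
    rcases List.prefix_cons_iff.mp h with rfl | ⟨y', rfl, hy'⟩
    · exact Or.inl (List.nil_prefix)
    · exact Or.inr ⟨y', rfl, hy'⟩
  | cons b x ih =>
    rcases List.prefix_cons_iff.mp h with rfl | ⟨y, rfl, hy⟩
    · exact Or.inl (List.nil_prefix)
    · rcases ih hy with hyx | ⟨y', rfl, hy'⟩
      · exact Or.inl (List.cons_prefix_cons.mpr ⟨rfl, hyx⟩)
      · exact Or.inr ⟨y', rfl, hy'⟩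

namespace Comtrace

section Occurrences

variable [DecidableEq E]

def occ (e : E) (v : List (Finset E)) : ℕ :=
  v.countP (e ∈ ·)

@[simp]
lemma occ_nil (e : E) : occ e [] = 0 := rfl

@[simp]
lemma occ_append (e : E) (x y : List (Finset E)) : occ e (x ++ y) = occ e x + occ e y :=
  List.countP_append

lemma occ_cons (e : E) (X : Finset E) (v : List (Finset E)) :
    occ e (X :: v) = occ e v + if e ∈ X then 1 else 0 := by
  simp [occ, List.countP_cons]

lemma occ_le_of_prefix (e : E) {x y : List (Finset E)} (h : x <+: y) : occ e x ≤ occ e y :=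
  h.countP_le

lemma occ_append_cons_cons_of_union {A B C : Finset E} (hdisj : Disjoint B C) (hBC : B ∪ C = A)
    (e : E) (p y : List (Finset E)) : occ e (p ++ B :: C :: y) = occ e (p ++ A :: y) := by
  subst hBC
  by_cases hB : e ∈ B <;> by_cases hC : e ∈ C
  · exact absurd hC (Finset.disjoint_left.mp hdisj hB)
  all_goals simp [occ_cons, hB, hC]

lemma exists_eq_append_cons_of_occ_pos {e : E} {v : List (Finset E)} (h : 0 < occ e v) :
    ∃ x Q z, v = x ++ Q :: z ∧ occ e x = 0 ∧ e ∈ Q := by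
  induction v with
  | nil => simp at h
  | cons X v ih =>
    by_cases hX : e ∈ X
    · exact ⟨[], X, v, rfl, rfl, hX⟩
    · rw [occ_cons, if_neg hX] at h
      obtain ⟨x, Q, z, rfl, hx, hQ⟩ := ih h
      exact ⟨X :: x, Q, z, rfl, by simp [occ_cons, hx, hX], hQ⟩

/-- `OccBefore v b c n m`: the `n`-th occurrence of `b` in `v` lies in an earlier step than the
`m`-th occurrence of `c` (counting from `0`; an occurrence that does not exist lies after
everything). -/
def OccBefore (v : List (Finset E)) (b c : E) (n m : ℕ) : Prop :=
  ∃ y, y <+: v ∧ n < occ b y ∧ occ c y ≤ m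

lemma not_occBefore_of_mem {b c : E} {Q : Finset E} (x z : List (Finset E)) (hc : c ∈ Q) :
    ¬ OccBefore (x ++ Q :: z) b c (occ b x) (occ c x) := by
  rintro ⟨y, hy, hb, hc'⟩
  rcases List.prefix_append_cons_cases hy with hyx | ⟨y', rfl, -⟩
  · exact absurd (occ_le_of_prefix b hyx) (not_le.mpr hb)
  · simp [occ_cons, hc] at hc'

lemma OccBefore.split_step {A B C : Finset E} (hdisj : Disjoint B C) (hBC : B ∪ C = A)
    {p z : List (Finset E)} {b c : E} {n m : ℕ} (h : OccBefore (p ++ A :: z) b c n m) :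
    OccBefore (p ++ B :: C :: z) b c n m := by
  obtain ⟨y, hy, hb, hc⟩ := h
  rcases List.prefix_append_cons_cases hy with hyp | ⟨y, rfl, hyz⟩
  · exact ⟨y, hyp.trans (List.prefix_append _ _), hb, hc⟩
  · refine ⟨p ++ B :: C :: y, by simpa using hyz, ?_, ?_⟩ <;>
      rwa [occ_append_cons_cons_of_union hdisj hBC]

lemma OccBefore.merge_steps {ser : E → E → Prop} {A B C : Finset E} (hdisj : Disjoint B C)
    (hBC : B ∪ C = A) (hser : ∀ b ∈ B, ∀ c ∈ C, ser b c)
    {p z : List (Finset E)} {b c : E} {n m : ℕ} (hbc : ¬ ser b c)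
    (h : OccBefore (p ++ B :: C :: z) b c n m) : OccBefore (p ++ A :: z) b c n m := by
  subst hBC
  obtain ⟨y, hy, hb, hc⟩ := h
  rcases List.prefix_append_cons_cases hy with hyp | ⟨y, rfl, hyz⟩
  · exact ⟨y, hyp.trans (List.prefix_append _ _), hb, hc⟩
  rcases List.prefix_cons_iff.mp hyz with rfl | ⟨y, rfl, hyz'⟩
  · -- the prefix ends between `B` and `C`
    by_cases hbB : b ∈ B
    · have hcC : c ∉ C := fun hcC => hbc (hser b hbB c hcC)
      refine ⟨p ++ [B ∪ C], by simp, ?_, ?_⟩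
      · simpa [occ_cons, hbB] using hb
      · simpa [occ_cons, hcC] using hc
    · refine ⟨p, List.prefix_append _ _, by simpa [occ_cons, hbB] using hb, ?_⟩
      simp only [occ_append] at hc
      omega
  · refine ⟨p ++ (B ∪ C) :: y, by simpa using hyz', ?_, ?_⟩ <;>
      rwa [← occ_append_cons_cons_of_union hdisj rfl]

def OccAgree (ser : E → E → Prop) (v w : List (Finset E)) : Prop :=
  (∀ e, occ e v = occ e w) ∧
    ∀ b c n m, ¬ ser b c → (OccBefore v b c n m ↔ OccBefore w b c n m)

lemma occAgree_equivalence (ser : E → E → Prop) : Equivalence (OccAgree ser (E := E)) where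
  refl _ := ⟨fun _ => rfl, fun _ _ _ _ _ => Iff.rfl⟩
  symm h := ⟨fun e => (h.1 e).symm, fun b c n m hbc => (h.2 b c n m hbc).symm⟩
  trans h₁ h₂ := ⟨fun e => (h₁.1 e).trans (h₂.1 e),
    fun b c n m hbc => (h₁.2 b c n m hbc).trans (h₂.2 b c n m hbc)⟩

end Occurrences

section Congruence

variable [DecidableEq E] {sim ser : E → E → Prop}

lemma occAgree_of_ctBase (hser_irr : ∀ e, ¬ ser e e) {v w : List (Finset E)}
    (h : CTBase sim ser v w) : OccAgree ser v w := by
  obtain ⟨p, z, A, B, C, -, -, -, -, -, hBC, hser, rfl, rfl⟩ := h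
  have hdisj : Disjoint B C :=
    Finset.disjoint_left.mpr fun e hB hC => hser_irr e (hser e hB e hC)
  refine ⟨fun e => (occ_append_cons_cons_of_union hdisj hBC e p z).symm,
    fun b c n m hbc => ⟨OccBefore.split_step hdisj hBC, OccBefore.merge_steps hdisj hBC hser hbc⟩⟩

lemma occAgree_of_ctEquiv (hser_irr : ∀ e, ¬ ser e e) {v w : List (Finset E)}
    (h : CTEquiv sim ser v w) : OccAgree ser v w :=
  h _ (occAgree_equivalence ser) fun _ _ => occAgree_of_ctBase hser_irr

lemma Canonical.not_fd {p z : List (Finset E)} {P Q : Finset E}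
    (h : Canonical sim ser (p ++ P :: Q :: z)) : ¬ FD sim ser P Q :=
  (List.isChain_cons_cons.mp (List.isChain_append.mp h).2.1).1

lemma fd_of_occAgree {B P Q : Finset E} {t p z : List (Finset E)} {a : E} (hB : IsStep sim B)
    (hagree : OccAgree ser (B :: t) (p ++ P :: Q :: z)) (haB : a ∈ B) (haQ : a ∈ Q)
    (hfirst : occ a (p ++ [P]) = 0) : FD sim ser P Q := by
  set x := p ++ [P]
  rw [show p ++ P :: Q :: z = x ++ Q :: z by simp [x]] at hagree
  set C := (Q ∩ B).filter (fun c => occ c x = 0)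
  have hmemC {c : E} : c ∈ C ↔ (c ∈ Q ∧ c ∈ B) ∧ occ c x = 0 := by
    simp only [C, Finset.mem_filter, Finset.mem_inter]
  refine ⟨C, ⟨⟨a, hmemC.mpr ⟨⟨haQ, haB⟩, hfirst⟩⟩, fun c hc d hd => hB.2 c (hmemC.mp hc).1.2 d
    (hmemC.mp hd).1.2⟩, fun c hc => (hmemC.mp hc).1.1, ?_, ?_⟩
  · intro b hbP c hc
    by_contra hbc
    have hbefore : OccBefore (x ++ Q :: z) b c 0 0 :=
      ⟨x, List.prefix_append _ _, by simp [x, occ_cons, hbP], (hmemC.mp hc).2.le⟩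
    exact not_occBefore_of_mem [] t (hmemC.mp hc).1.2 ((hagree.2 b c 0 0 hbc).mpr hbefore)
  · intro c hc d hd
    rw [Finset.mem_sdiff, hmemC, not_and] at hd
    by_contra hcd
    have hbefore : OccBefore (B :: t) c d (occ c x) (occ d x) := by
      refine ⟨[B], by simp, by simp [occ_cons, (hmemC.mp hc).1.2, (hmemC.mp hc).2], ?_⟩
      by_cases hdB : d ∈ B
      · simpa [occ_cons, hdB, Nat.one_le_iff_ne_zero] using hd.2 ⟨hd.1, hdB⟩
      · simp [occ_cons, hdB]
    exact not_occBefore_of_mem x z hd.1 ((hagree.2 c d _ _ hcd).mp hbefore)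

lemma mem_of_occAgree_of_canonical {A B : Finset E} {t t' : List (Finset E)} {a : E}
    (hcan : Canonical sim ser (A :: t)) (hB : IsStep sim B)
    (hagree : OccAgree ser (B :: t') (A :: t)) (haB : a ∈ B) : a ∈ A := by
  by_contra haA
  have hocc : 0 < occ a (A :: t) := by simp [← hagree.1 a, occ_cons, haB]
  obtain ⟨x, Q, z, hu, hx, haQ⟩ := exists_eq_append_cons_of_occ_pos hocc
  rcases List.eq_nil_or_concat' x with rfl | ⟨p, P, rfl⟩
  · obtain ⟨rfl, -⟩ := List.cons.inj hu
    exact haA haQ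
  · rw [show A :: t = p ++ P :: Q :: z by simp [hu]] at hcan hagree
    exact Canonical.not_fd hcan (fd_of_occAgree hB hagree haB haQ hx)

end Congruence

end Comtrace

theorem stmt6_general [DecidableEq E] (sim ser : E → E → Prop)
    (hsim_irr : ∀ a, ¬ sim a a)
    (hser_sub : ∀ a b, ser a b → sim a b)
    (A : Finset E) (t : List (Finset E))
    (hu : IsStepSeq sim (A :: t)) (hcan : Canonical sim ser (A :: t)) :
    ∀ a : E, a ∈ A ↔
      ∃ (B : Finset E) (t' : List (Finset E)),
        IsStepSeq sim (B :: t') ∧ CTEquiv sim ser (B :: t') (A :: t) ∧ a ∈ B := by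
  have hser_irr : ∀ e, ¬ ser e e := fun e h => hsim_irr e (hser_sub e e h)
  refine fun a => ⟨fun ha => ⟨A, t, hu, fun _ hc _ => hc.refl _, ha⟩, ?_⟩
  rintro ⟨B, t', hw, hequiv, haB⟩
  exact Comtrace.mem_of_occAgree_of_canonical hcan (hw B List.mem_cons_self)
    (Comtrace.occAgree_of_ctEquiv hser_irr hequiv) haB

/-- The first step of a canonical step sequence consists exactly of the events that can
occur in the first step of some congruent step sequence. -/
theorem stmt6 [DecidableEq E] [Fintype E] (sim ser : E → E → Prop)
    (hsim_irr : ∀ a, ¬ sim a a) (hsim_symm : ∀ a b, sim a b → sim b a)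
    (hser_sub : ∀ a b, ser a b → sim a b)
    (A : Finset E) (t : List (Finset E))
    (hu : IsStepSeq sim (A :: t)) (hcan : Canonical sim ser (A :: t)) :
    ∀ a : E, a ∈ A ↔
      ∃ (B : Finset E) (t' : List (Finset E)),
        IsStepSeq sim (B :: t') ∧ CTEquiv sim ser (B :: t') (A :: t) ∧ a ∈ B :=
  stmt6_general sim ser hsim_irr hser_sub A t hu hcan
end

section
/- Let (E, sim, ser) be a comtrace alphabet. A step sequence u is in GMC-form if and only if u is canonical. -/
variable {E : Type*}

/-- Greedy maximally concurrent form: each step of `u` is at least as large as the first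
step of any step sequence congruent to the corresponding suffix of `u`. -/
def GMCForm [DecidableEq E] (sim ser : E → E → Prop) (u : List (Finset E)) : Prop :=
  ∀ i : Fin u.length, ∀ (B : Finset E) (y : List (Finset E)),
    IsStep sim B → IsStepSeq sim y →
    CTEquiv sim ser (B :: y) (u.drop (i : ℕ)) → B.card ≤ (u.get i).card


/-!
Merging along a forward dependency: if `(Aᵢ, Aᵢ₊₁) ∈ FD` via `C`, the suffix `Aᵢ Aᵢ₊₁ ⋯` is
congruent to `(Aᵢ ∪ C)(Aᵢ₊₁ \ C)⋯`, whose first step is strictly larger; so a sequence in GMC-form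
is canonical.

Conversely, comtrace congruence preserves, for every pair `(e, f) ∉ ser`, the relative order of
the occurrences of `e` and of `f`. Let `B·y ≡ A₀ A₁ ⋯` with the right-hand side canonical, and
suppose some `e ∈ B` first occurs in a later step `Aⱼ₊₁`. Let `C` be the set of elements of `Aⱼ₊₁`
that lie in `B` and occur there for the first time. In `B·y` these stand in the first step, so
their order relative to the elements of `Aⱼ` is reversed and relative to the rest of `Aⱼ₊₁` it
becomes strict; by the invariance all these pairs are in `ser`, i.e. `C` witnesses
`(Aⱼ, Aⱼ₊₁) ∈ FD`. Hence `B ⊆ A₀`, which is the GMC inequality.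
-/

theorem LeastEquiv.equivalence_s7 {α : Type*} (r : α → α → Prop) : Equivalence (LeastEquiv r) where
  refl x _ hc _ := hc.refl x
  symm h c hc hr := hc.symm (h c hc hr)
  trans h₁ h₂ c hc hr := hc.trans (h₁ c hc hr) (h₂ c hc hr)

theorem LeastEquiv.of_rel_s7 {α : Type*} {r : α → α → Prop} {x y : α} (h : r x y) :
    LeastEquiv r x y :=
  fun _ _ hr => hr x y h

section Occurrences

variable [DecidableEq E]

def stepCount (u : List (Finset E)) (e : E) : ℕ :=
  u.countP (e ∈ ·)

@[simp]
theorem stepCount_nil (e : E) : stepCount [] e = 0 := rfl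

@[simp]
theorem stepCount_cons (A : Finset E) (u : List (Finset E)) (e : E) :
    stepCount (A :: u) e = stepCount u e + if e ∈ A then 1 else 0 := by
  simp only [stepCount, List.countP_cons, decide_eq_true_eq]

@[simp]
theorem stepCount_append (u v : List (Finset E)) (e : E) :
    stepCount (u ++ v) e = stepCount u e + stepCount v e :=
  List.countP_append

theorem stepCount_take_mono (u : List (Finset E)) (e : E) {i j : ℕ} (hij : i ≤ j) :
    stepCount (u.take i) e ≤ stepCount (u.take j) e :=
  (List.take_prefix_take_left hij).countP_le

theorem stepCount_take_add_one {u : List (Finset E)} {j : ℕ} (hj : j < u.length) (e : E) :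
    stepCount (u.take (j + 1)) e = stepCount (u.take j) e + if e ∈ u[j] then 1 else 0 := by
  rw [List.take_add_one, List.getElem?_eq_getElem hj, Option.toList_some, stepCount_append,
    stepCount_cons, stepCount_nil, zero_add]

theorem exists_first_occurrence {u : List (Finset E)} {e : E} (h : 0 < stepCount u e) :
    ∃ (j : ℕ) (hj : j < u.length), e ∈ u[j] ∧ stepCount (u.take j) e = 0 := by
  induction u with
  | nil => simp at h
  | cons A t ih =>
    by_cases hA : e ∈ A
    · exact ⟨0, by simp, hA, by simp⟩
    · obtain ⟨j, hj, hej, hfirst⟩ := ih (by simpa [hA] using h)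
      exact ⟨j + 1, by simpa using hj, by simpa using hej, by simpa [hA] using hfirst⟩

/-- `Precedes u e k f m`: the `k`-th occurrence of `e` in `u` lies in a strictly earlier step
than the `m`-th occurrence of `f` (counting from `0`; a missing occurrence of `f` counts as coming after everything). -/
def Precedes (u : List (Finset E)) (e : E) (k : ℕ) (f : E) (m : ℕ) : Prop :=
  ∃ i, k < stepCount (u.take i) e ∧ stepCount (u.take i) f ≤ m

theorem Precedes.of_dominated {u v : List (Finset E)} {e f : E} {k m : ℕ}
    (h : Precedes v e k f m)
    (hdom : ∀ i, ∃ i', stepCount (v.take i) e ≤ stepCount (u.take i') e ∧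
      stepCount (u.take i') f ≤ stepCount (v.take i) f) :
    Precedes u e k f m := by
  obtain ⟨i, hk, hm⟩ := h
  obtain ⟨i', he, hf⟩ := hdom i
  exact ⟨i', by omega, by omega⟩

theorem not_precedes_cons_zero {B : Finset E} {y : List (Finset E)} {e f : E} (k : ℕ)
    (hf : f ∈ B) : ¬Precedes (B :: y) e k f 0 := by
  rintro ⟨_ | i, hk, hf0⟩
  · simp at hk
  · simp [hf] at hf0

def SameOccurrenceOrder (ser : E → E → Prop) (u v : List (Finset E)) : Prop :=
  (∀ e, stepCount u e = stepCount v e) ∧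
    ∀ e f, ¬ser e f → ∀ k m, Precedes u e k f m ↔ Precedes v e k f m

theorem sameOccurrenceOrder_equivalence (ser : E → E → Prop) :
    Equivalence (SameOccurrenceOrder ser) where
  refl _ := ⟨fun _ => rfl, fun _ _ _ _ _ => Iff.rfl⟩
  symm h := ⟨fun e => (h.1 e).symm, fun e f hef k m => (h.2 e f hef k m).symm⟩
  trans h₁ h₂ :=
    ⟨fun e => (h₁.1 e).trans (h₂.1 e),
      fun e f hef k m => (h₁.2 e f hef k m).trans (h₂.2 e f hef k m)⟩

end Occurrences

section Congruence

variable [DecidableEq E] {sim ser : E → E → Prop}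

theorem stepCount_union_cons {B C : Finset E} (hBC : Disjoint B C) (z : List (Finset E))
    (e : E) : stepCount ((B ∪ C) :: z) e = stepCount (B :: C :: z) e := by
  have : e ∈ B → e ∉ C := fun hB => Finset.disjoint_left.mp hBC hB
  by_cases hB : e ∈ B <;> by_cases hC : e ∈ C <;> simp_all

theorem exists_take_split_stepCount_eq {B C : Finset E} (hBC : Disjoint B C)
    (w z : List (Finset E)) (i : ℕ) :
    ∃ i', ∀ e,
      stepCount ((w ++ B :: C :: z).take i') e = stepCount ((w ++ (B ∪ C) :: z).take i) e := by
  rcases le_or_gt i w.length with hi | hi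
  · exact ⟨i, fun e => by rw [List.take_append_of_le_length hi, List.take_append_of_le_length hi]⟩
  · obtain ⟨j, rfl⟩ := Nat.exists_eq_add_of_lt hi
    refine ⟨w.length + (j + 2), fun e => ?_⟩
    simp only [add_assoc]
    simp [List.take_length_add_append, List.take_succ_cons, stepCount_union_cons hBC]

/-- The prefix `w ++ [B]` of the split sequence has no counterpart among the merged prefixes; it is
dominated by `w` if `e ∉ B`, and by `w ++ [B ∪ C]` if `e ∈ B`, since then `f ∉ C`. -/
theorem exists_take_merge_dominates {B C : Finset E} (hBC : Disjoint B C)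
    (hser : ∀ b ∈ B, ∀ c ∈ C, ser b c) {e f : E} (hef : ¬ser e f) (w z : List (Finset E))
    (i : ℕ) : ∃ i',
      stepCount ((w ++ B :: C :: z).take i) e ≤ stepCount ((w ++ (B ∪ C) :: z).take i') e ∧
      stepCount ((w ++ (B ∪ C) :: z).take i') f ≤ stepCount ((w ++ B :: C :: z).take i) f := by
  rcases le_or_gt i w.length with hi | hi
  · refine ⟨i, ?_⟩
    rw [List.take_append_of_le_length hi, List.take_append_of_le_length hi]
    exact ⟨le_rfl, le_rfl⟩
  obtain ⟨_ | j, rfl⟩ := Nat.exists_eq_add_of_lt hi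
  · by_cases he : e ∈ B
    · have hf : f ∉ C := fun hf => hef (hser e he f hf)
      refine ⟨w.length + 1, ?_⟩
      simp [List.take_length_add_append, he, hf]
    · refine ⟨w.length, ?_⟩
      simp [List.take_length_add_append (i := 1), he]
  · refine ⟨w.length + (j + 1), ?_⟩
    simp only [add_assoc]
    simp [List.take_length_add_append, List.take_succ_cons, stepCount_union_cons hBC]

theorem CTBase.sameOccurrenceOrder (hser_irr : ∀ a, ¬ser a a) {u v : List (Finset E)}
    (h : CTBase sim ser u v) : SameOccurrenceOrder ser u v := by
  obtain ⟨w, z, -, B, C, -, -, -, -, -, rfl, hser, rfl, rfl⟩ := h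
  have hBC : Disjoint B C := Finset.disjoint_left.mpr fun x hB hC => hser_irr x (hser x hB x hC)
  refine ⟨fun e => by simp [stepCount_union_cons hBC],
    fun e f hef k m => ⟨fun hp => ?_, fun hp => ?_⟩⟩
  · refine hp.of_dominated fun i => ?_
    obtain ⟨i', hi'⟩ := exists_take_split_stepCount_eq hBC w z i
    exact ⟨i', (hi' e).ge, (hi' f).le⟩
  · exact hp.of_dominated (exists_take_merge_dominates hBC hser hef w z)

theorem CTEquiv.sameOccurrenceOrder (hser_irr : ∀ a, ¬ser a a) {u v : List (Finset E)}
    (h : CTEquiv sim ser u v) : SameOccurrenceOrder ser u v :=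
  h _ (sameOccurrenceOrder_equivalence ser) fun _ _ hb => hb.sameOccurrenceOrder hser_irr

end Congruence

section GMC

variable [DecidableEq E] {sim ser : E → E → Prop}

/-- The witness is the set of elements of `u[j + 1]` that lie in `B` and occur there for the
first time. -/
theorem fd_of_sameOccurrenceOrder {B : Finset E} {y u : List (Finset E)} (hu : IsStepSeq sim u)
    (h : SameOccurrenceOrder ser (B :: y) u) {j : ℕ} (hj : j + 1 < u.length) {e : E}
    (heB : e ∈ B) (he : e ∈ u[j + 1]) (hfirst : stepCount (u.take (j + 1)) e = 0) :
    FD sim ser u[j] u[j + 1] := by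
  set C := u[j + 1].filter (fun f => f ∈ B ∧ stepCount (u.take (j + 1)) f = 0)
  have hstep : IsStep sim u[j + 1] := hu _ (List.getElem_mem hj)
  refine ⟨C, ⟨⟨e, by simp [C, he, heB, hfirst]⟩, fun a ha b hb =>
    hstep.2 a (Finset.filter_subset _ _ ha) b (Finset.filter_subset _ _ hb)⟩,
    Finset.filter_subset _ _, ?_, ?_⟩
  · intro g hg f hf
    by_contra hgf
    simp only [C, Finset.mem_filter] at hf
    have hpre : Precedes u g 0 f 0 :=
      ⟨j + 1, by simp [stepCount_take_add_one (show j < u.length by omega), hg], hf.2.2.le⟩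
    exact not_precedes_cons_zero 0 hf.2.1 ((h.2 g f hgf 0 0).mpr hpre)
  · intro f hf g hg
    by_contra hfg
    simp only [C, Finset.mem_sdiff, Finset.mem_filter, not_and] at hf hg
    set m := stepCount (u.take (j + 1)) g
    have hpre : Precedes (B :: y) f 0 g m := by
      refine ⟨1, by simp [hf.2.1], ?_⟩
      by_cases hgB : g ∈ B
      · simpa [hgB, Nat.one_le_iff_ne_zero] using hg.2 hg.1 hgB
      · simp [hgB]
    obtain ⟨i, hfi, hgi⟩ := (h.2 f g hfg 0 m).mp hpre
    have hi : j + 2 ≤ i := by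
      by_contra
      have := stepCount_take_mono u f (show i ≤ j + 1 by omega)
      omega
    have := stepCount_take_mono u g hi
    rw [stepCount_take_add_one hj, if_pos hg.1] at this
    omega

theorem Canonical.subset_head {A B : Finset E} {t y : List (Finset E)}
    (hu : IsStepSeq sim (A :: t)) (hcan : Canonical sim ser (A :: t))
    (h : SameOccurrenceOrder ser (B :: y) (A :: t)) : B ⊆ A := by
  intro e heB
  obtain ⟨_ | j, hj, he, hfirst⟩ :=
    exists_first_occurrence (u := A :: t) (e := e) (by rw [← h.1 e]; simp [heB])
  · exact he
  · exact absurd (fd_of_sameOccurrenceOrder hu h hj heB he hfirst) (hcan.getElem j hj)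

theorem Canonical.gmcForm (hser_irr : ∀ a, ¬ser a a) {u : List (Finset E)}
    (hu : IsStepSeq sim u) (hcan : Canonical sim ser u) : GMCForm sim ser u := by
  rintro ⟨i, hi⟩ B y - - hequiv
  rw [List.drop_eq_getElem_cons hi] at hequiv
  have hsub : B ⊆ u[i] := by
    refine Canonical.subset_head (sim := sim) ?_ ?_ (hequiv.sameOccurrenceOrder hser_irr)
    · rw [← List.drop_eq_getElem_cons]
      exact fun A hA => hu A (List.mem_of_mem_drop hA)
    · rw [← List.drop_eq_getElem_cons]
      exact hcan.drop i
  simpa using Finset.card_le_card hsub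

theorem IsStep.union (hsim_symm : ∀ a b, sim a b → sim b a)
    (hser_sub : ∀ a b, ser a b → sim a b) {A C : Finset E} (hA : IsStep sim A)
    (hC : IsStep sim C) (hAC : ∀ a ∈ A, ∀ c ∈ C, ser a c) : IsStep sim (A ∪ C) := by
  refine ⟨hA.1.mono Finset.subset_union_left, fun a ha b hb hab => ?_⟩
  rcases Finset.mem_union.mp ha with ha | ha <;> rcases Finset.mem_union.mp hb with hb | hb
  · exact hA.2 a ha b hb hab
  · exact hser_sub a b (hAC a ha b hb)
  · exact hsim_symm b a (hser_sub b a (hAC b hb a ha))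
  · exact hC.2 a ha b hb hab

theorem exists_ctEquiv_of_subset {w z : List (Finset E)} {X C : Finset E}
    (hw : IsStepSeq sim w) (hz : IsStepSeq sim z) (hX : IsStep sim X) (hC : IsStep sim C)
    (hCX : C ⊆ X) (hser : ∀ c ∈ C, ∀ b ∈ X \ C, ser c b) :
    ∃ y, IsStepSeq sim y ∧ CTEquiv sim ser (w ++ C :: y) (w ++ X :: z) := by
  rcases (X \ C).eq_empty_or_nonempty with hXC | hXC
  · have hCX : C = X := hCX.antisymm (Finset.sdiff_eq_empty_iff_subset.mp hXC)
    exact ⟨z, hz, hCX ▸ (LeastEquiv.equivalence_s7 _).refl _⟩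
  · have hXC_step : IsStep sim (X \ C) :=
      ⟨hXC, fun a ha b hb => hX.2 a (Finset.sdiff_subset ha) b (Finset.sdiff_subset hb)⟩
    refine ⟨(X \ C) :: z, ?_, (LeastEquiv.equivalence_s7 _).symm (LeastEquiv.of_rel_s7 ?_)⟩
    · simpa [IsStepSeq] using ⟨hXC_step, hz⟩
    · exact ⟨w, z, X, C, X \ C, hw, hz, hX, hC, hXC_step, Finset.union_sdiff_of_subset hCX,
        hser, rfl, rfl⟩

theorem FD.exists_ctEquiv_card_lt (hser_irr : ∀ a, ¬ser a a)
    (hsim_symm : ∀ a b, sim a b → sim b a) (hser_sub : ∀ a b, ser a b → sim a b)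
    {A X : Finset E} {z : List (Finset E)} (hA : IsStep sim A) (hX : IsStep sim X)
    (hz : IsStepSeq sim z) (hfd : FD sim ser A X) :
    ∃ B y, IsStep sim B ∧ IsStepSeq sim y ∧ CTEquiv sim ser (B :: y) (A :: X :: z) ∧
      A.card < B.card := by
  obtain ⟨C, hC, hCX, hAC, hCX_ser⟩ := hfd
  obtain ⟨y, hy, hequiv⟩ := exists_ctEquiv_of_subset (w := [A]) (by simpa [IsStepSeq] using hA)
    hz hX hC hCX hCX_ser
  have hAC_disj : Disjoint A C :=
    Finset.disjoint_left.mpr fun a ha hc => hser_irr a (hAC a ha a hc)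
  have hmerge : CTBase sim ser ((A ∪ C) :: y) (A :: C :: y) :=
    ⟨[], y, A ∪ C, A, C, by simp [IsStepSeq], hy, hA.union hsim_symm hser_sub hC hAC, hA, hC,
      rfl, hAC, rfl, rfl⟩
  refine ⟨A ∪ C, y, hA.union hsim_symm hser_sub hC hAC, hy,
    (LeastEquiv.equivalence_s7 _).trans (LeastEquiv.of_rel_s7 hmerge) hequiv, ?_⟩
  rw [Finset.card_union_of_disjoint hAC_disj]
  have := hC.1.card_pos
  omega

theorem GMCForm.canonical (hser_irr : ∀ a, ¬ser a a) (hsim_symm : ∀ a b, sim a b → sim b a)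
    (hser_sub : ∀ a b, ser a b → sim a b) {u : List (Finset E)} (hu : IsStepSeq sim u)
    (hg : GMCForm sim ser u) : Canonical sim ser u := by
  refine List.isChain_iff_getElem.mpr fun i hi hfd => ?_
  obtain ⟨B, y, hB, hy, hequiv, hlt⟩ := hfd.exists_ctEquiv_card_lt hser_irr hsim_symm hser_sub
    (hu _ (List.getElem_mem _)) (hu _ (List.getElem_mem _)) (z := u.drop (i + 2))
    (fun A hA => hu A (List.mem_of_mem_drop hA))
  have hdrop : u.drop i = u[i] :: u[i + 1] :: u.drop (i + 2) := by
    rw [List.drop_eq_getElem_cons, List.drop_eq_getElem_cons]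
  have := hg ⟨i, by omega⟩ B y hB hy (hdrop ▸ hequiv)
  simp only [List.get_eq_getElem] at this
  omega

end GMC

theorem stmt7_general [DecidableEq E] (sim ser : E → E → Prop)
    (hsim_irr : ∀ a, ¬ sim a a) (hsim_symm : ∀ a b, sim a b → sim b a)
    (hser_sub : ∀ a b, ser a b → sim a b)
    (u : List (Finset E)) (hu : IsStepSeq sim u) :
    GMCForm sim ser u ↔ Canonical sim ser u := by
  have hser_irr : ∀ a, ¬ser a a := fun a h => hsim_irr a (hser_sub a a h)
  exact ⟨GMCForm.canonical hser_irr hsim_symm hser_sub hu, Canonical.gmcForm hser_irr hu⟩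

/-- A step sequence is in GMC-form iff it is canonical. -/
theorem stmt7 [DecidableEq E] [Fintype E] (sim ser : E → E → Prop)
    (hsim_irr : ∀ a, ¬ sim a a) (hsim_symm : ∀ a b, sim a b → sim b a)
    (hser_sub : ∀ a b, ser a b → sim a b)
    (u : List (Finset E)) (hu : IsStepSeq sim u) :
    GMCForm sim ser u ↔ Canonical sim ser u :=
  stmt7_general sim ser hsim_irr hsim_symm hser_sub u hu
end

section
/- Let (E, sim, ser) be a comtrace alphabet. If u is a canonical step sequence and u ≡ v, then length(u) ≤ length(v). -/
variable {E : Type*}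

/-!
Give every occurrence of an event a position: the `m`-th occurrence of `a` in `w` sits at the
`m`-th index of a step of `w` containing `a`. Splitting a step `B ∪ C` into `B·C` moves
occurrences by at most one place, and the only comparison it changes is that `a ∈ B` and
`b ∈ C`, simultaneous before, are now in the order `a` before `b`, where `(a, b) ∈ ser`. So
congruent sequences agree on every strict comparison "`a` before `b`" with `(a, b) ∉ ser` and
on every weak one "`a` not after `b`" with `(b, a) ∉ ser`.

If `u` is canonical and `u ≡ v`, no occurrence is earlier in `v` than in `u`, by induction on its
position in `u`: the elements of step `j + 1` of `u` that would be earlier form a step `C`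
witnessing `(u_j, u_{j+1}) ∈ FD`. Applied to an occurrence in the last step of `u`, this gives
`length u ≤ length v`.
-/

section Occurrences

variable [DecidableEq E]

def occPos (w : List (Finset E)) (a : E) : List ℕ :=
  w.findIdxs (a ∈ ·)

theorem mem_occPos {w : List (Finset E)} {a : E} {i : ℕ} :
    i ∈ occPos w a ↔ ∃ S, w[i]? = some S ∧ a ∈ S := by
  simp [occPos, List.getElem?_eq_some_iff]

theorem lt_length_of_mem_occPos {w : List (Finset E)} {a : E} {i : ℕ}
    (h : i ∈ occPos w a) : i < w.length := by
  obtain ⟨S, hS, -⟩ := mem_occPos.mp h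
  exact (List.getElem?_eq_some_iff.mp hS).1

theorem exists_occPos_getElem?_eq {w : List (Finset E)} {a : E} {i : ℕ} {S : Finset E}
    (hS : w[i]? = some S) (ha : a ∈ S) : ∃ m : ℕ, (occPos w a)[m]? = some i :=
  List.mem_iff_getElem?.mp (mem_occPos.mpr ⟨S, hS, ha⟩)

/-- The new position of an occurrence at `p` once step `n` is split in two; `α` holds iff the
occurrence goes to the first half. -/
def splitPos (n : ℕ) (α : Prop) [Decidable α] (p : ℕ) : ℕ :=
  if p < n ∨ p = n ∧ α then p else p + 1

theorem occPos_split (x z : List (Finset E)) {B C : Finset E} (hBC : Disjoint B C) (a : E) :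
    occPos (x ++ B :: C :: z) a =
      (occPos (x ++ (B ∪ C) :: z) a).map (splitPos x.length (a ∈ B)) := by
  have hx : (occPos x a).map (splitPos x.length (a ∈ B)) = occPos x a :=
    (List.map_congr_left fun p hp => if_pos (Or.inl (lt_length_of_mem_occPos hp))).trans
      (List.map_id _)
  simp only [occPos, List.findIdxs_append, List.map_append, List.findIdxs_cons, Nat.zero_add]
  rw [← occPos, hx]
  congr 1
  set n := x.length
  have hz : z.findIdxs (a ∈ ·) (n + 1 + 1) =
      (z.findIdxs (a ∈ ·) (n + 1)).map (splitPos n (a ∈ B)) := by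
    rw [List.findIdxs_start, List.findIdxs_start (s := n + 1), List.map_map]
    exact List.map_congr_left fun p _ => by simp only [Function.comp_apply, splitPos]; grind
  by_cases hB : a ∈ B
  · have hC : a ∉ C := Finset.disjoint_left.mp hBC hB
    simp [splitPos, hB, hC, hz]
  · by_cases hC : a ∈ C <;> simp [splitPos, hB, hC, hz]

theorem splitPos_lt_splitPos_iff {n p q : ℕ} {α β : Prop} [Decidable α] [Decidable β]
    (h : p = n → q = n → α → β) : splitPos n α p < splitPos n β q ↔ p < q := by
  unfold splitPos
  split_ifs <;> grind

theorem splitPos_le_splitPos_iff {n p q : ℕ} {α β : Prop} [Decidable α] [Decidable β]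
    (h : p = n → q = n → β → α) : splitPos n α p ≤ splitPos n β q ↔ p ≤ q := by
  unfold splitPos
  split_ifs <;> grind

def OccRel (r : ℕ → ℕ → Prop) (w : List (Finset E)) (a : E) (m : ℕ) (b : E) (n : ℕ) : Prop :=
  ∃ p q, (occPos w a)[m]? = some p ∧ (occPos w b)[n]? = some q ∧ r p q

theorem occRel_iff_of_occPos_eq_map {r : ℕ → ℕ → Prop} {w w' : List (Finset E)}
    {g : E → ℕ → ℕ} (hg : ∀ c, occPos w' c = (occPos w c).map (g c)) {a b : E} {m n : ℕ}
    (hr : ∀ p ∈ occPos w a, ∀ q ∈ occPos w b, r (g a p) (g b q) ↔ r p q) :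
    OccRel r w' a m b n ↔ OccRel r w a m b n := by
  simp only [OccRel, hg, List.getElem?_map, Option.map_eq_some_iff]
  constructor
  · rintro ⟨-, -, ⟨p, hp, rfl⟩, ⟨q, hq, rfl⟩, hpq⟩
    exact ⟨p, q, hp, hq, (hr p (List.mem_of_getElem? hp) q (List.mem_of_getElem? hq)).mp hpq⟩
  · rintro ⟨p, q, hp, hq, hpq⟩
    exact ⟨_, _, ⟨p, hp, rfl⟩, ⟨q, hq, rfl⟩,
      (hr p (List.mem_of_getElem? hp) q (List.mem_of_getElem? hq)).mpr hpq⟩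

def OccOrderAgree (ser : E → E → Prop) (u v : List (Finset E)) : Prop :=
  ∀ a b m n, (¬ ser a b → (OccRel (· < ·) u a m b n ↔ OccRel (· < ·) v a m b n)) ∧
    (¬ ser b a → (OccRel (· ≤ ·) u a m b n ↔ OccRel (· ≤ ·) v a m b n))

theorem occOrderAgree_equivalence (ser : E → E → Prop) : Equivalence (OccOrderAgree ser) where
  refl _ _ _ _ _ := ⟨fun _ => Iff.rfl, fun _ => Iff.rfl⟩
  symm h a b m n := ⟨fun hab => ((h a b m n).1 hab).symm, fun hba => ((h a b m n).2 hba).symm⟩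
  trans h h' a b m n := ⟨fun hab => ((h a b m n).1 hab).trans ((h' a b m n).1 hab),
    fun hba => ((h a b m n).2 hba).trans ((h' a b m n).2 hba)⟩

theorem occOrderAgree_of_ctBase {sim ser : E → E → Prop} (hser : ∀ a, ¬ ser a a)
    {u v : List (Finset E)} (h : CTBase sim ser u v) : OccOrderAgree ser u v := by
  obtain ⟨x, z, A, B, C, -, -, -, -, -, rfl, hBC, rfl, rfl⟩ := h
  have hdisj : Disjoint B C := Finset.disjoint_left.mpr fun e hB hC => hser e (hBC e hB e hC)
  have hmid : ∀ c p, p ∈ occPos (x ++ (B ∪ C) :: z) c → p = x.length → c ∈ B ∨ c ∈ C := by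
    rintro c p hp rfl
    obtain ⟨S, hS, hc⟩ := mem_occPos.mp hp
    simp only [List.getElem?_append_right le_rfl, Nat.sub_self, List.getElem?_cons_zero,
      Option.some.injEq] at hS
    exact Finset.mem_union.mp (hS ▸ hc)
  intro a b m n
  constructor
  · refine fun hab => (occRel_iff_of_occPos_eq_map (occPos_split x z hdisj)
      fun p hp q hq => splitPos_lt_splitPos_iff fun hpn hqn haB => ?_).symm
    exact (hmid b q hq hqn).resolve_right fun hbC => hab (hBC a haB b hbC)
  · refine fun hba => (occRel_iff_of_occPos_eq_map (occPos_split x z hdisj)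
      fun p hp q hq => splitPos_le_splitPos_iff fun hpn hqn hbB => ?_).symm
    exact (hmid a p hp hpn).resolve_right fun haC => hba (hBC b hbB a haC)

theorem IsStep.mono {sim : E → E → Prop} {B C : Finset E} (hB : IsStep sim B) (hCB : C ⊆ B)
    (hC : C.Nonempty) : IsStep sim C :=
  ⟨hC, fun a ha b hb => hB.2 a (hCB ha) b (hCB hb)⟩

def OccNotEarlier (u v : List (Finset E)) (i : ℕ) (c : E) : Prop :=
  ∀ m q : ℕ, (occPos u c)[m]? = some i → (occPos v c)[m]? = some q → i ≤ q

section OccOrderAgree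

variable {ser : E → E → Prop} {u v : List (Finset E)} (huv : OccOrderAgree ser u v)
include huv

theorem OccOrderAgree.occNotEarlier_succ_of_not_ser {j : ℕ} {A : Finset E} {e c : E}
    (hA : u[j]? = some A) (he : e ∈ A) (hej : OccNotEarlier u v j e) (hec : ¬ ser e c) :
    OccNotEarlier u v (j + 1) c := by
  intro m q hm hq
  obtain ⟨me, hme⟩ := exists_occPos_getElem?_eq hA he
  obtain ⟨p', q', hp', hq', hpq⟩ := ((huv e c me m).1 hec).mp ⟨j, j + 1, hme, hm, j.lt_succ_self⟩
  cases hq.symm.trans hq'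
  have := hej me p' hme hp'
  omega

theorem OccOrderAgree.occNotEarlier_of_not_ser {i : ℕ} {B : Finset E} {b c : E}
    (hB : u[i]? = some B) (hb : b ∈ B) (hbi : OccNotEarlier u v i b) (hcb : ¬ ser c b) :
    OccNotEarlier u v i c := by
  intro m q hm hq
  obtain ⟨mb, hmb⟩ := exists_occPos_getElem?_eq hB hb
  obtain ⟨p', q', hp', hq', hpq⟩ := ((huv b c mb m).2 hcb).mp ⟨i, i, hmb, hm, le_rfl⟩
  cases hq.symm.trans hq'
  have := hbi mb p' hmb hp'
  omega

theorem OccOrderAgree.occNotEarlier_succ_of_not_FD {sim : E → E → Prop} {j : ℕ} {A B : Finset E}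
    (hA : u[j]? = some A) (hB : u[j + 1]? = some B) (hBstep : IsStep sim B)
    (hAB : ¬ FD sim ser A B) (ih : ∀ e ∈ A, OccNotEarlier u v j e) :
    ∀ c ∈ B, OccNotEarlier u v (j + 1) c := by
  classical
  by_contra! ⟨c, hcB, hc⟩
  refine hAB ⟨B.filter (¬ OccNotEarlier u v (j + 1) ·),
    hBstep.mono (Finset.filter_subset _ _) ⟨c, Finset.mem_filter.mpr ⟨hcB, hc⟩⟩,
    Finset.filter_subset _ _, fun e he c' hc' => ?_, fun c' hc' b hb => ?_⟩
  · by_contra hec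
    exact (Finset.mem_filter.mp hc').2 (huv.occNotEarlier_succ_of_not_ser hA he (ih e he) hec)
  · by_contra hcb
    obtain ⟨hbB, hbC⟩ := Finset.mem_sdiff.mp hb
    have hbi : OccNotEarlier u v (j + 1) b :=
      not_not.mp fun h => hbC (Finset.mem_filter.mpr ⟨hbB, h⟩)
    exact (Finset.mem_filter.mp hc').2 (huv.occNotEarlier_of_not_ser hB hbB hbi hcb)

theorem OccOrderAgree.occNotEarlier {sim : E → E → Prop} (hu : IsStepSeq sim u)
    (hcan : Canonical sim ser u) (i : ℕ) (c : E) : OccNotEarlier u v i c := by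
  induction i generalizing c with
  | zero => exact fun _ q _ _ => q.zero_le
  | succ j ih =>
    intro m q hm hq
    obtain ⟨B, hB, hcB⟩ := mem_occPos.mp (List.mem_of_getElem? hm)
    have hj : j + 1 < u.length := (List.getElem?_eq_some_iff.mp hB).1
    rw [List.getElem?_eq_getElem hj, Option.some.injEq] at hB
    subst hB
    exact huv.occNotEarlier_succ_of_not_FD (List.getElem?_eq_getElem (by omega))
      (List.getElem?_eq_getElem hj) (hu _ (List.getElem_mem hj)) (hcan.getElem j hj)
      (fun e _ => ih e) c hcB m q hm hq

theorem OccOrderAgree.length_le {sim : E → E → Prop} (hser : ∀ a, ¬ ser a a)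
    (hu : IsStepSeq sim u) (hcan : Canonical sim ser u) : u.length ≤ v.length := by
  obtain hnil | hpos := u.length.eq_zero_or_pos
  · omega
  have hk : u.length - 1 < u.length := by omega
  obtain ⟨a, ha⟩ := (hu _ (List.getElem_mem hk)).1
  obtain ⟨m, hm⟩ := exists_occPos_getElem?_eq (List.getElem?_eq_getElem hk) ha
  obtain ⟨p, q, hp, hq, -⟩ := ((huv a a m m).2 (hser a)).mp ⟨_, _, hm, hm, le_rfl⟩
  have hkq := huv.occNotEarlier hu hcan _ a m q hm hq
  have hqv := lt_length_of_mem_occPos (List.mem_of_getElem? hq)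
  omega

end OccOrderAgree

end Occurrences

theorem stmt9_general [DecidableEq E] (sim ser : E → E → Prop)
    (hsim_irr : ∀ a, ¬ sim a a)
    (hser_sub : ∀ a b, ser a b → sim a b)
    (u v : List (Finset E)) (hu : IsStepSeq sim u)
    (hcan : Canonical sim ser u) (huv : CTEquiv sim ser u v) :
    u.length ≤ v.length := by
  have hser : ∀ a, ¬ ser a a := fun a h => hsim_irr a (hser_sub a a h)
  have hagree : OccOrderAgree ser u v :=
    huv _ (occOrderAgree_equivalence ser) fun _ _ => occOrderAgree_of_ctBase hser
  exact hagree.length_le hser hu hcan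

/-- A canonical step sequence has minimal length in its congruence class. -/
theorem stmt9 [DecidableEq E] [Fintype E] (sim ser : E → E → Prop)
    (hsim_irr : ∀ a, ¬ sim a a) (hsim_symm : ∀ a b, sim a b → sim b a)
    (hser_sub : ∀ a b, ser a b → sim a b)
    (u v : List (Finset E)) (hu : IsStepSeq sim u) (hv : IsStepSeq sim v)
    (hcan : Canonical sim ser u) (huv : CTEquiv sim ser u v) :
    u.length ≤ v.length :=
  stmt9_general sim ser hsim_irr hser_sub u v hu hcan huv
end

section
/- For every stratified order ⊲ on a set X, the triple (X, ⊲, ⊲⌢) is a stratified order structure, i.e., the pair of relations (⊲, ⊲⌢) satisfies axioms S1–S4. -/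
/-- A stratified order structure `(X, ≺, ⊏)`: axioms S1–S4. -/
def IsSOStruct {X : Type*} (prec sub : X → X → Prop) : Prop :=
  (∀ a, ¬ sub a a) ∧
  (∀ a b, prec a b → sub a b) ∧
  (∀ a b c, sub a b → sub b c → a ≠ c → sub a c) ∧
  (∀ a b c, (sub a b ∧ prec b c) ∨ (prec a b ∧ sub b c) → prec a c)

/-- For every stratified order `⊲`, the triple `(X, ⊲, ⊲⌢)` is a so-structure,
where `a ⊲⌢ b` iff `a ≠ b ∧ ¬ b ⊲ a`. -/
theorem stmt13 {X : Type*} (r : X → X → Prop) (h : IsStratOrder r) :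
    IsSOStruct r (fun a b => a ≠ b ∧ ¬ r b a) := by
  obtain ⟨hirr, htr, heq⟩ := h
  refine ⟨fun a ha => ha.1 rfl, fun a b hab => ⟨?_, fun hba => hirr a (htr a b a hab hba)⟩,
    ?_, ?_⟩
  · rintro rfl; exact hirr a hab
  · rintro a b c ⟨hab, hba⟩ ⟨hbc, hcb⟩ hac
    refine ⟨hac, fun hca => ?_⟩
    have hab' : ¬ r a b := fun h' => hcb (htr c a b hca h')
    have hbc' : ¬ r b c := fun h' => hba (htr b c a h' hca)
    rcases heq a b c (Or.inr ⟨hab', hba⟩) (Or.inr ⟨hbc', hcb⟩) with h' | h'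
    · exact hac h'
    · exact h'.2 hca
  · rintro a b c (⟨⟨hab, hba⟩, hbc⟩ | ⟨hab, hbc, hcb⟩)
    · by_contra hac
      have hca : ¬ r c a := fun h' => hba (htr b c a hbc h')
      have hab' : ¬ r a b := fun h' => hac (htr a b c h' hbc)
      rcases heq b a c (Or.inr ⟨hba, hab'⟩) (Or.inr ⟨hac, hca⟩) with h' | h'
      · exact hirr b (h' ▸ hbc)
      · exact h'.1 hbc
    · by_contra hac
      have hca : ¬ r c a := fun h' => hcb (htr c a b h' hab)
      have hbc' : ¬ r b c := fun h' => hac (htr a b c hab h')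
      rcases heq a c b (Or.inr ⟨hac, hca⟩) (Or.inr ⟨hcb, hbc'⟩) with h' | h'
      · exact hirr a (h' ▸ hab)
      · exact h'.1 hab
end

section
/- Let S = (X, ≺, ⊏) be a so-structure and let ⊲ ∈ ext(S). Then: (1) ⊲ \ ser_S = ≺ = ≺ \ ser_S; (2) ⊲⌢ \ ser_S⁻¹ = ⊏ = ⊏ \ ser_S⁻¹. In particular (X, ⊲ \ ser_S, ⊲⌢ \ ser_S⁻¹) = (X, ≺, ⊏). -/
/-- A stratified extension of a so-structure `(X, prec, sub)`: a stratified order `r`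
with `prec ⊆ r` and `sub ⊆ r⌢`. -/
def IsStratExt {X : Type*} (prec sub r : X → X → Prop) : Prop :=
  IsStratOrder r ∧ (∀ a b, prec a b → r a b) ∧ (∀ a b, sub a b → a ≠ b ∧ ¬ r b a)

/-- The simultaneity relation of a so-structure. -/
def simS {X : Type*} (prec : X → X → Prop) (a b : X) : Prop :=
  a ≠ b ∧ ¬ prec a b ∧ ¬ prec b a

/-- The serializability relation of a so-structure. -/
def serS {X : Type*} (prec sub : X → X → Prop) (a b : X) : Prop :=
  simS prec a b ∧ ¬ sub b a

/-- Recovering a so-structure from any of its stratified extensions: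
`⊲ \ ser_S = ≺ = ≺ \ ser_S` and `⊲⌢ \ ser_S⁻¹ = ⊏ = ⊏ \ ser_S⁻¹`. -/
theorem stmt14 {X : Type*} (prec sub r : X → X → Prop)
    (hS : IsSOStruct prec sub) (hr : IsStratExt prec sub r) :
    (∀ a b : X,
      ((r a b ∧ ¬ serS prec sub a b) ↔ prec a b) ∧
      (prec a b ↔ (prec a b ∧ ¬ serS prec sub a b))) ∧
    (∀ a b : X,
      (((a ≠ b ∧ ¬ r b a) ∧ ¬ serS prec sub b a) ↔ sub a b) ∧
      (sub a b ↔ (sub a b ∧ ¬ serS prec sub b a))) := by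
  obtain ⟨⟨hirr, htrans, _⟩, hp, hs⟩ := hr
  obtain ⟨_, hS2, _, _⟩ := hS
  constructor
  · intro a b
    constructor
    · constructor
      · rintro ⟨hrab, hns⟩
        by_contra hnp
        exact hns ⟨⟨fun h => hirr a (h ▸ hrab), hnp,
          fun h => hirr a (htrans a b a hrab (hp b a h))⟩,
          fun h => (hs b a h).2 hrab⟩
      · intro h
        exact ⟨hp a b h, fun hser => hser.1.2.1 h⟩
    · exact ⟨fun h => ⟨h, fun hser => hser.1.2.1 h⟩, fun h => h.1⟩
  · intro a b
    constructor
    · constructor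
      · rintro ⟨⟨hab, hnr⟩, hns⟩
        by_contra hnsub
        exact hns ⟨⟨fun h => hab h.symm, fun h => hnr (hp b a h),
          fun h => hnsub (hS2 a b h)⟩, hnsub⟩
      · intro h
        exact ⟨hs a b h, fun hser => hser.2 h⟩
    · exact ⟨fun h => ⟨h, fun hser => hser.2 h⟩, fun h => h.1⟩
end

section
/- Let S = (X, ≺, ⊏) be a so-structure and a, b ∈ X. Then: (1) (a,b) ∈ sim_S iff there exists ⊲ ∈ ext(S) with a ≠ b, ¬(a ⊲ b) and ¬(b ⊲ a); (2) (a,b) ∈ ser_S iff there exists ⊲ ∈ ext(S) with a ≠ b, ¬(a ⊲ b) and ¬(b ⊲ a), and there exists ⊲' ∈ ext(S) with a ⊲' b; (3) if a ≠ b, then (a,b) ∉ ser_S iff a ≺ b or b ⊏ a. -/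
section AuxSO
variable {X : Type*}

/-- Extend a reflexive transitive relation to a total preorder preserving strictness. -/
lemma exists_total_preorder_ext (Q : X → X → Prop)
    (hrefl : ∀ x, Q x x) (htrans : ∀ x y z, Q x y → Q y z → Q x z) :
    ∃ T : X → X → Prop,
      (∀ x y, Q x y → T x y) ∧ (∀ x y, T x y ∨ T y x) ∧
      (∀ x y z, T x y → T y z → T x z) ∧
      (∀ x y, Q x y → ¬ Q y x → ¬ T y x) := by
  let s : Setoid X := ⟨fun x y => Q x y ∧ Q y x,
    ⟨fun x => ⟨hrefl x, hrefl x⟩, fun h => ⟨h.2, h.1⟩,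
      fun h1 h2 => ⟨htrans _ _ _ h1.1 h2.1, htrans _ _ _ h2.2 h1.2⟩⟩⟩
  let R : Quotient s → Quotient s → Prop :=
    Quotient.lift₂ Q (by
      intro a b a' b' ha hb
      exact propext ⟨fun h => htrans _ _ _ (htrans _ _ _ ha.2 h) hb.1,
        fun h => htrans _ _ _ (htrans _ _ _ ha.1 h) hb.2⟩)
  have Rmk : ∀ x y : X, R ⟦x⟧ ⟦y⟧ = Q x y := fun x y => rfl
  haveI : IsPartialOrder (Quotient s) R :=
    { refl := fun q => Quotient.inductionOn q (fun x => hrefl x)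
      trans := fun q1 q2 q3 => Quotient.inductionOn₃ q1 q2 q3
        (fun x y z h1 h2 => htrans x y z h1 h2)
      antisymm := fun q1 q2 => Quotient.inductionOn₂ q1 q2
        (fun x y h1 h2 => Quotient.sound ⟨h1, h2⟩) }
  obtain ⟨L, hL, hRL⟩ := extend_partialOrder R
  haveI := hL
  refine ⟨fun x y => L ⟦x⟧ ⟦y⟧, fun x y h => hRL _ _ h, fun x y => total_of L _ _,
    fun x y z h1 h2 => _root_.trans h1 h2, ?_⟩
  intro x y hxy hnyx hT
  have hx : L ⟦x⟧ ⟦y⟧ := hRL _ _ hxy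
  have : (⟦y⟧ : Quotient s) = ⟦x⟧ := antisymm hT hx
  exact hnyx (Quotient.exact this).1

/-- The strict part of a total preorder is a stratified order. -/
lemma strat_of_total (T : X → X → Prop) (htot : ∀ x y, T x y ∨ T y x)
    (htrans : ∀ x y z, T x y → T y z → T x z) :
    IsStratOrder (fun x y => T x y ∧ ¬ T y x) := by
  have key : ∀ x y : X, (x = y ∨ (¬(T x y ∧ ¬T y x) ∧ ¬(T y x ∧ ¬T x y))) → T x y ∧ T y x := by
    intro x y h
    rcases h with rfl | ⟨h1, h2⟩
    · exact ⟨(htot x x).elim id id, (htot x x).elim id id⟩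
    · rcases htot x y with h | h
      · exact ⟨h, not_not.1 fun hn => h1 ⟨h, hn⟩⟩
      · exact ⟨not_not.1 fun hn => h2 ⟨h, hn⟩, h⟩
  refine ⟨fun a h => h.2 h.1,
    fun a b c h1 h2 => ⟨htrans _ _ _ h1.1 h2.1, fun h => h2.2 (htrans _ _ _ h h1.1)⟩, ?_⟩
  intro a b c ha hb
  have h1 := key a b ha
  have h2 := key b c hb
  right
  exact ⟨fun h => h.2 (htrans _ _ _ h2.2 h1.2), fun h => h.2 (htrans _ _ _ h1.1 h2.1)⟩

/-- From a refl/trans relation containing `sub` whose reverse avoids `prec`,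
build a stratified extension. -/
lemma mk_ext (prec sub : X → X → Prop) (hS : IsSOStruct prec sub)
    (Q' : X → X → Prop) (hrefl : ∀ x, Q' x x)
    (htrans : ∀ x y z, Q' x y → Q' y z → Q' x z)
    (hsub : ∀ x y, sub x y → Q' x y)
    (hstrict : ∀ x y, prec x y → ¬ Q' y x) :
    ∃ r : X → X → Prop, IsStratExt prec sub r ∧ (∀ x y, Q' x y → ¬ r y x) ∧
      (∀ x y, Q' x y → ¬ Q' y x → r x y) := by
  obtain ⟨S1, S2, S3, S4⟩ := hS
  obtain ⟨T, hT, htot, hTt, hTs⟩ := exists_total_preorder_ext Q' hrefl htrans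
  refine ⟨fun x y => T x y ∧ ¬ T y x, ⟨strat_of_total T htot hTt, ?_, ?_⟩, ?_, ?_⟩
  · intro x y hp
    exact ⟨hT _ _ (hsub _ _ (S2 _ _ hp)), hTs _ _ (hsub _ _ (S2 _ _ hp)) (hstrict _ _ hp)⟩
  · intro x y hs
    refine ⟨fun e => S1 x (e ▸ hs), fun h => h.2 (hT _ _ (hsub _ _ hs))⟩
  · intro x y h hr
    exact hr.2 (hT _ _ h)
  · intro x y h hn
    exact ⟨hT _ _ h, hTs _ _ h hn⟩

end AuxSO

/-- Characterization of simultaneity and serializability of a so-structure via its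
stratified extensions. -/
theorem stmt15 {X : Type*} (prec sub : X → X → Prop)
    (hS : IsSOStruct prec sub) (a b : X) :
    (simS prec a b ↔
      ∃ r : X → X → Prop, IsStratExt prec sub r ∧ a ≠ b ∧ ¬ r a b ∧ ¬ r b a) ∧
    (serS prec sub a b ↔
      (∃ r : X → X → Prop, IsStratExt prec sub r ∧ a ≠ b ∧ ¬ r a b ∧ ¬ r b a) ∧
      (∃ r : X → X → Prop, IsStratExt prec sub r ∧ r a b)) ∧
    (a ≠ b → (¬ serS prec sub a b ↔ (prec a b ∨ sub b a))) := by
  obtain ⟨S1, S2, S3, S4⟩ := hS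
  -- base preorder
  set Q : X → X → Prop := fun x y => x = y ∨ sub x y with hQ
  have Qrefl : ∀ x, Q x x := fun x => Or.inl rfl
  have Qtrans : ∀ x y z, Q x y → Q y z → Q x z := by
    rintro x y z (rfl | h1) (rfl | h2)
    · exact Or.inl rfl
    · exact Or.inr h2
    · exact Or.inr h1
    · by_cases e : x = z
      · exact Or.inl e
      · exact Or.inr (S3 _ _ _ h1 h2 e)
  have hpnQ : ∀ x y, prec x y → ¬ Q y x := by
    rintro x y hp (rfl | h)
    · exact S1 y (S2 _ _ hp)
    · exact S1 y (S2 _ _ (S4 y x y (Or.inl ⟨h, hp⟩)))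
  have L1 : ∀ x y z, prec x y → Q y z → prec x z := by
    rintro x y z hp (rfl | h)
    · exact hp
    · exact S4 _ _ _ (Or.inr ⟨hp, h⟩)
  have L2 : ∀ x y z, Q z x → prec x y → prec z y := by
    rintro x y z (rfl | h) hp
    · exact hp
    · exact S4 _ _ _ (Or.inl ⟨h, hp⟩)
  have hS' : IsSOStruct prec sub := ⟨S1, S2, S3, S4⟩
  -- (E1): from simS, an extension with a, b incomparable
  have E1 : simS prec a b →
      ∃ r : X → X → Prop, IsStratExt prec sub r ∧ a ≠ b ∧ ¬ r a b ∧ ¬ r b a := by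
    rintro ⟨hne, hab, hba⟩
    set Q1 : X → X → Prop :=
      fun x y => Q x y ∨ (Q x a ∧ Q b y) ∨ (Q x b ∧ Q a y) with hQ1
    have Q1refl : ∀ x, Q1 x x := fun x => Or.inl (Qrefl x)
    have Q1trans : ∀ x y z, Q1 x y → Q1 y z → Q1 x z := by
      rintro x y z (h | ⟨h1, h2⟩ | ⟨h1, h2⟩) (h' | ⟨h1', h2'⟩ | ⟨h1', h2'⟩)
      · exact Or.inl (Qtrans _ _ _ h h')
      · exact Or.inr (Or.inl ⟨Qtrans _ _ _ h h1', h2'⟩)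
      · exact Or.inr (Or.inr ⟨Qtrans _ _ _ h h1', h2'⟩)
      · exact Or.inr (Or.inl ⟨h1, Qtrans _ _ _ h2 h'⟩)
      · exact Or.inr (Or.inl ⟨h1, h2'⟩)
      · exact Or.inl (Qtrans _ _ _ h1 h2')
      · exact Or.inr (Or.inr ⟨h1, Qtrans _ _ _ h2 h'⟩)
      · exact Or.inl (Qtrans _ _ _ h1 h2')
      · exact Or.inr (Or.inr ⟨h1, h2'⟩)
    have Q1sub : ∀ x y, sub x y → Q1 x y := fun x y h => Or.inl (Or.inr h)
    have Q1strict : ∀ x y, prec x y → ¬ Q1 y x := by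
      rintro x y hp (h | ⟨h1, h2⟩ | ⟨h1, h2⟩)
      · exact hpnQ _ _ hp h
      · exact hba (L2 _ _ _ h2 (L1 _ _ _ hp h1))
      · exact hab (L2 _ _ _ h2 (L1 _ _ _ hp h1))
    obtain ⟨r, hr, hback, _⟩ := mk_ext prec sub hS' Q1 Q1refl Q1trans Q1sub Q1strict
    exact ⟨r, hr, hne, hback b a (Or.inr (Or.inr ⟨Qrefl b, Qrefl a⟩)),
      hback a b (Or.inr (Or.inl ⟨Qrefl a, Qrefl b⟩))⟩
  -- (E2): from serS, an extension with r a b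
  have E2 : serS prec sub a b →
      ∃ r : X → X → Prop, IsStratExt prec sub r ∧ r a b := by
    rintro ⟨⟨hne, hab, hba⟩, hnsub⟩
    set Q2 : X → X → Prop := fun x y => Q x y ∨ (Q x a ∧ Q b y) with hQ2
    have Q2refl : ∀ x, Q2 x x := fun x => Or.inl (Qrefl x)
    have Q2trans : ∀ x y z, Q2 x y → Q2 y z → Q2 x z := by
      rintro x y z (h | ⟨h1, h2⟩) (h' | ⟨h1', h2'⟩)
      · exact Or.inl (Qtrans _ _ _ h h')
      · exact Or.inr ⟨Qtrans _ _ _ h h1', h2'⟩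
      · exact Or.inr ⟨h1, Qtrans _ _ _ h2 h'⟩
      · exact Or.inr ⟨h1, h2'⟩
    have Q2sub : ∀ x y, sub x y → Q2 x y := fun x y h => Or.inl (Or.inr h)
    have hnQba : ¬ Q b a := by rintro (rfl | h); exacts [hne rfl, hnsub h]
    have Q2strict : ∀ x y, prec x y → ¬ Q2 y x := by
      rintro x y hp (h | ⟨h1, h2⟩)
      · exact hpnQ _ _ hp h
      · exact hba (L2 _ _ _ h2 (L1 _ _ _ hp h1))
    obtain ⟨r, hr, _, hfwd⟩ := mk_ext prec sub hS' Q2 Q2refl Q2trans Q2sub Q2strict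
    refine ⟨r, hr, hfwd a b (Or.inr ⟨Qrefl a, Qrefl b⟩) ?_⟩
    rintro (h | ⟨h, -⟩) <;> exact hnQba h
  refine ⟨⟨E1, ?_⟩, ⟨?_, ?_⟩, ?_⟩
  · rintro ⟨r, ⟨_, hpr, _⟩, hne, h1, h2⟩
    exact ⟨hne, fun h => h1 (hpr _ _ h), fun h => h2 (hpr _ _ h)⟩
  · intro hser
    exact ⟨E1 hser.1, E2 hser⟩
  · rintro ⟨⟨r, ⟨_, hpr, _⟩, hne, h1, h2⟩, ⟨r', ⟨_, _, hsr'⟩, hab'⟩⟩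
    exact ⟨⟨hne, fun h => h1 (hpr _ _ h), fun h => h2 (hpr _ _ h)⟩,
      fun h => (hsr' _ _ h).2 hab'⟩
  · intro hne
    constructor
    · intro hn
      by_cases hp : prec a b
      · exact Or.inl hp
      · by_cases hs : sub b a
        · exact Or.inr hs
        · by_cases hp' : prec b a
          · exact Or.inr (S2 _ _ hp')
          · exact absurd ⟨⟨hne, hp, hp'⟩, hs⟩ hn
    · rintro (h | h) ⟨⟨_, hab, _⟩, hnsub⟩
      · exact hab h
      · exact hnsub h
end
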